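/- (Bounds for a weighted average of mixture components.) Let W, W_0, …, W_K be integrable real random variables and γ_0, …, γ_K ≥ 0 with Σ_{k=0}^{K} γ_k = 1, such that the CDFs satisfy F_W(w) = Σ_{k=0}^{K} γ_k · F_{W_k}(w) for all w ∈ ℝ. Then for all indices 0 ≤ l ≤ l' ≤ K with γ̄ := Σ_{k=l}^{l'} γ_k > 0: E[F_W^{-1}(U) | U ≤ γ̄] ≤ Σ_{k=l}^{l'} (γ_k/γ̄) · E[W_k] ≤ E[F_W^{-1}(U) | U ≥ 1 − γ̄]. -/

import Mathlib

/-!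
The quantile function `Q` of `μ = law(W)` pushes Lebesgue measure on `(0, 1)` forward to `μ`, and
the components `l, …, l'` form a sub-measure `ν ≤ μ` of mass `γ̄` whose mean is the weighted
average. Among sub-measures of `μ` of mass `g`, the bottom slice `Q|(0, g]` has the least mean:
with `c = Q g`, `g c - ∫_(0,g] Q = ∫ (c - x)⁺ dμ ≥ ∫ (c - x)⁺ dν ≥ g c - ∫ x dν`.
Applied to the complementary sub-measure `μ - ν`, of mass `1 - γ̄`, this gives the upper bound.
-/

open MeasureTheory ProbabilityTheory

/-- CDF of a random variable `W` under a measure `μ`. -/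
noncomputable def cdfOf {Ω : Type*} [MeasurableSpace Ω] (μ : MeasureTheory.Measure Ω)
    (W : Ω → ℝ) (w : ℝ) : ℝ :=
  (μ {ω | W ω ≤ w}).toReal

/-- Quantile function `F⁻¹(u) = inf {w : F(w) ≥ u}`. -/
noncomputable def quantileFn (F : ℝ → ℝ) (u : ℝ) : ℝ := sInf {w | u ≤ F w}

/-- Lower truncated mean `E[F⁻¹(U) | U ≤ γ]` for `U` uniform on `[0,1]`,
written as `γ⁻¹ ∫_{(0,γ]} F⁻¹(u) du`. -/
noncomputable def lowerTrunc (F : ℝ → ℝ) (γ : ℝ) : ℝ :=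
  γ⁻¹ * ∫ u in Set.Ioc (0 : ℝ) γ, quantileFn F u

/-- Upper truncated mean `E[F⁻¹(U) | U ≥ 1 − γ]` for `U` uniform on `[0,1]`,
written as `γ⁻¹ ∫_{[1−γ,1]} F⁻¹(u) du`. -/
noncomputable def upperTrunc (F : ℝ → ℝ) (γ : ℝ) : ℝ :=
  γ⁻¹ * ∫ u in Set.Ico (1 - γ) (1 : ℝ), quantileFn F u

open Set Filter

section Quantile

variable {μ : Measure ℝ}

theorem quantileFn_cdf_le_iff {u w : ℝ} (hu : u ∈ Ioo (0 : ℝ) 1) :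
    quantileFn (cdf μ) u ≤ w ↔ u ≤ cdf μ w := by
  have hne : {x | u ≤ cdf μ x}.Nonempty :=
    ((tendsto_cdf_atTop μ).eventually (eventually_ge_nhds hu.2)).exists
  have hbdd : BddBelow {x | u ≤ cdf μ x} := by
    obtain ⟨b, hb⟩ := eventually_atBot.mp
      ((tendsto_cdf_atBot μ).eventually (eventually_lt_nhds hu.1))
    exact ⟨b, fun x hx => le_of_not_gt fun hxb => (hb x hxb.le).not_ge hx⟩
  refine ⟨fun h => ?_, fun h => csInf_le hbdd h⟩
  refine ge_of_tendsto ((cdf μ).right_continuous w |>.mono Ioi_subset_Ici_self)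
    (eventually_nhdsWithin_of_forall fun y hy => ?_)
  obtain ⟨x, hx, hxy⟩ := exists_lt_of_csInf_lt hne (h.trans_lt hy)
  exact hx.trans (monotone_cdf μ hxy.le)

theorem monotoneOn_quantileFn_cdf : MonotoneOn (quantileFn (cdf μ)) (Ioo 0 1) :=
  fun _ hu _ hv huv => (quantileFn_cdf_le_iff hu).2 <| huv.trans <|
    (quantileFn_cdf_le_iff hv).1 le_rfl

theorem aemeasurable_quantileFn_cdf :
    AEMeasurable (quantileFn (cdf μ)) (volume.restrict (Ioo 0 1)) :=
  aemeasurable_restrict_of_monotoneOn measurableSet_Ioo monotoneOn_quantileFn_cdf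

theorem map_quantileFn_cdf [IsProbabilityMeasure μ] :
    (volume.restrict (Ioo (0 : ℝ) 1)).map (quantileFn (cdf μ)) = μ := by
  refine Measure.ext_of_Iic _ _ fun w => ?_
  rw [Measure.map_apply_of_aemeasurable aemeasurable_quantileFn_cdf measurableSet_Iic,
    Measure.restrict_apply' measurableSet_Ioo, ← ofReal_cdf]
  have hpre : quantileFn (cdf μ) ⁻¹' Iic w ∩ Ioo 0 1 = Iic (cdf μ w) ∩ Ioo 0 1 := by
    ext u
    simp only [mem_inter_iff, mem_preimage, mem_Iic, and_congr_left_iff]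
    exact quantileFn_cdf_le_iff
  rw [hpre]
  refine le_antisymm ?_ ?_
  · calc volume (Iic (cdf μ w) ∩ Ioo 0 1) ≤ volume (Ioc 0 (cdf μ w)) :=
          measure_mono fun u hu => ⟨hu.2.1, hu.1⟩
      _ = ENNReal.ofReal (cdf μ w) := by rw [Real.volume_Ioc, sub_zero]
  · calc ENNReal.ofReal (cdf μ w) = volume (Ioo 0 (cdf μ w)) := by rw [Real.volume_Ioo, sub_zero]
      _ ≤ volume (Iic (cdf μ w) ∩ Ioo 0 1) :=
          measure_mono fun u hu => ⟨hu.2.le, hu.1, hu.2.trans_le (cdf_le_one μ w)⟩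

theorem integral_comp_quantileFn_cdf [IsProbabilityMeasure μ] {f : ℝ → ℝ}
    (hf : AEStronglyMeasurable f μ) :
    ∫ u in Ioo 0 1, f (quantileFn (cdf μ) u) = ∫ x, f x ∂μ := by
  rw [← map_quantileFn_cdf (μ := μ)] at hf
  rw [← integral_map aemeasurable_quantileFn_cdf hf, map_quantileFn_cdf]

theorem integrableOn_quantileFn_cdf [IsProbabilityMeasure μ] (hμ : Integrable id μ) :
    IntegrableOn (quantileFn (cdf μ)) (Ioo 0 1) := by
  rw [← map_quantileFn_cdf (μ := μ)] at hμ
  exact (integrable_map_measure aestronglyMeasurable_id aemeasurable_quantileFn_cdf).1 hμ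

end Quantile

section TruncatedMean

variable {μ ν : Measure ℝ} [IsProbabilityMeasure μ]

theorem setIntegral_Ioc_quantileFn_cdf (hμ : Integrable id μ) {g : ℝ}
    (hg : g ∈ Ioo (0 : ℝ) 1) :
    ∫ u in Ioc 0 g, quantileFn (cdf μ) u
      = g * quantileFn (cdf μ) g - ∫ x, max (quantileFn (cdf μ) g - x) 0 ∂μ := by
  set Q := quantileFn (cdf μ)
  have hsub : Ioc 0 g ⊆ Ioo 0 1 := fun u hu => ⟨hu.1, hu.2.trans_lt hg.2⟩
  have hpos : EqOn (fun u => max (Q g - Q u) 0) ((Ioc 0 g).indicator fun u => Q g - Q u)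
      (Ioo 0 1) := by
    intro u hu
    dsimp only
    by_cases hug : u ≤ g
    · rw [indicator_of_mem (show u ∈ Ioc 0 g from ⟨hu.1, hug⟩)]
      exact max_eq_left (sub_nonneg.2 (monotoneOn_quantileFn_cdf hu hg hug))
    · rw [indicator_of_notMem fun h => hug h.2]
      exact max_eq_right (sub_nonpos.2 (monotoneOn_quantileFn_cdf hg hu (le_of_not_ge hug)))
  have hQ : IntegrableOn Q (Ioc 0 g) := (integrableOn_quantileFn_cdf hμ).mono_set hsub
  have hc : IntegrableOn (fun _ => Q g) (Ioc 0 g) := integrableOn_const measure_Ioc_lt_top.ne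
  rw [← integral_comp_quantileFn_cdf (μ := μ) (f := fun x => max (Q g - x) 0) (by fun_prop),
    setIntegral_congr_fun measurableSet_Ioo hpos, setIntegral_indicator measurableSet_Ioc,
    inter_eq_right.2 hsub, integral_sub hc hQ, setIntegral_const,
    Real.volume_real_Ioc_of_le hg.1.le, smul_eq_mul, sub_zero]
  ring

theorem setIntegral_Ioc_quantileFn_cdf_le_integral (hμ : Integrable id μ) (hνμ : ν ≤ μ) :
    ∫ u in Ioc 0 (ν.real univ), quantileFn (cdf μ) u ≤ ∫ x, x ∂ν := by
  have := isFiniteMeasure_of_le μ hνμ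
  have hν : Integrable (fun x => x) ν := hμ.mono_measure hνμ
  obtain hg0 | hg0 := measureReal_nonneg (μ := ν) (s := univ) |>.eq_or_lt
  · rw [Measure.measure_univ_eq_zero.1
      ((measureReal_eq_zero_iff (measure_ne_top _ _)).1 hg0.symm)]
    simp
  have hg1 : ν.real univ ≤ 1 :=
    (ENNReal.toReal_mono (measure_ne_top μ univ) (hνμ univ)).trans_eq probReal_univ
  -- `quantileFn (cdf μ) 1` may be the junk value `sInf ∅ = 0`, so full mass is the case `ν = μ`
  obtain hg1 | hg1 := hg1.lt_or_eq
  · set g := ν.real univ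
    set c := quantileFn (cdf μ) g
    have hc : Integrable (fun x => c - x) ν := (integrable_const c).sub hν
    rw [setIntegral_Ioc_quantileFn_cdf hμ ⟨hg0, hg1⟩]
    calc g * c - ∫ x, max (c - x) 0 ∂μ ≤ g * c - ∫ x, max (c - x) 0 ∂ν :=
          sub_le_sub_left (integral_mono_measure hνμ (ae_of_all _ fun _ => le_max_right _ _)
            ((integrable_const c).sub hμ).pos_part) _
      _ ≤ g * c - ∫ x, (c - x) ∂ν :=
          sub_le_sub_left (integral_mono hc hc.pos_part fun _ => le_max_left _ _) _
      _ = ∫ x, x ∂ν := by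
          rw [integral_sub (integrable_const c) hν, integral_const, smul_eq_mul]
          ring
  · have hνμ : ν = μ := Measure.eq_of_le_of_measure_univ_eq hνμ (by
      rw [measure_univ (μ := μ), ← ENNReal.ofReal_toReal (measure_ne_top ν univ),
        ← measureReal_def, hg1, ENNReal.ofReal_one])
    subst hνμ
    rw [hg1, integral_Ioc_eq_integral_Ioo]
    exact (integral_comp_quantileFn_cdf (f := fun x => x) aestronglyMeasurable_id).le


theorem integral_le_setIntegral_Ico_quantileFn_cdf (hμ : Integrable id μ) (hνμ : ν ≤ μ) :
    ∫ x, x ∂ν ≤ ∫ u in Ico (1 - ν.real univ) 1, quantileFn (cdf μ) u := by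
  have := isFiniteMeasure_of_le μ hνμ
  have hμ' : Integrable (fun x => x) μ := hμ
  have hmass : (μ - ν).real univ = 1 - ν.real univ := by
    rw [measureReal_def, Measure.sub_apply MeasurableSet.univ hνμ,
      ENNReal.toReal_sub_of_le (hνμ univ) (measure_ne_top _ _), ← measureReal_def,
      ← measureReal_def, probReal_univ]
  have hlow := setIntegral_Ioc_quantileFn_cdf_le_integral hμ (Measure.sub_le (μ := μ) (ν := ν))
  have hsum : ∫ x, x ∂(μ - ν) + ∫ x, x ∂ν = ∫ x, x ∂μ := by
    rw [← integral_add_measure (hμ'.mono_measure Measure.sub_le) (hμ'.mono_measure hνμ),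
      Measure.sub_add_cancel_of_le hνμ]
  rw [hmass] at hlow
  set Q := quantileFn (cdf μ)
  set a := 1 - ν.real univ
  have ha0 : 0 ≤ a := hmass ▸ measureReal_nonneg
  have ha1 : a ≤ 1 := by linarith [measureReal_nonneg (μ := ν) (s := univ)]
  have hQ : IntegrableOn Q (Ioc 0 1) :=
    (integrableOn_quantileFn_cdf hμ).congr_set_ae Ioo_ae_eq_Ioc.symm
  have hsplit := setIntegral_union (Ioc_disjoint_Ioc_of_le le_rfl) measurableSet_Ioc
    (hQ.mono_set (Ioc_subset_Ioc_right ha1)) (hQ.mono_set (Ioc_subset_Ioc_left ha0))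
  rw [Ioc_union_Ioc_eq_Ioc ha0 ha1, integral_Ioc_eq_integral_Ioo,
    integral_comp_quantileFn_cdf (f := fun x => x) aestronglyMeasurable_id,
    integral_Ioc_eq_integral_Ioo (x := a), ← integral_Ico_eq_integral_Ioo] at hsplit
  linarith

end TruncatedMean

section Mixture

variable {Ω ι : Type*} [MeasurableSpace Ω] {P : Measure Ω}

theorem cdfOf_eq_cdf_map [IsProbabilityMeasure P] {W : Ω → ℝ} (hW : AEMeasurable W P) :
    cdfOf P W = cdf (P.map W) := by
  have := Measure.isProbabilityMeasure_map (μ := P) hW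
  ext w
  rw [cdf_eq_real, measureReal_def, Measure.map_apply_of_aemeasurable hW measurableSet_Iic]
  rfl

variable (P) in
noncomputable def mixtureLaw (X : ι → Ω → ℝ) (γ : ι → ℝ) (s : Finset ι) :
    Measure ℝ :=
  ∑ k ∈ s, ENNReal.ofReal (γ k) • P.map (X k)

variable {X : ι → Ω → ℝ} {γ : ι → ℝ} {s t : Finset ι}

instance [IsFiniteMeasure P] : IsFiniteMeasure (mixtureLaw P X γ s) where
  measure_univ_lt_top := by
    rw [mixtureLaw, Measure.finsetSum_apply]
    exact ENNReal.sum_lt_top.2 fun k _ => ENNReal.mul_lt_top ENNReal.ofReal_lt_top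
      (measure_lt_top _ _)

theorem mixtureLaw_mono (hst : s ⊆ t) : mixtureLaw P X γ s ≤ mixtureLaw P X γ t := by
  classical
  rw [mixtureLaw, mixtureLaw, ← Finset.sum_sdiff hst]
  exact Measure.le_add_left le_rfl

theorem mixtureLaw_apply (hX : ∀ k ∈ s, AEMeasurable (X k) P) {A : Set ℝ}
    (hA : MeasurableSet A) :
    mixtureLaw P X γ s A = ∑ k ∈ s, ENNReal.ofReal (γ k) * P (X k ⁻¹' A) := by
  rw [mixtureLaw, Measure.finsetSum_apply]
  refine Finset.sum_congr rfl fun k hk => ?_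
  rw [Measure.smul_apply, smul_eq_mul, Measure.map_apply_of_aemeasurable (hX k hk) hA]

theorem mixtureLaw_real_univ [IsProbabilityMeasure P] (hX : ∀ k ∈ s, AEMeasurable (X k) P)
    (hγ : ∀ k ∈ s, 0 ≤ γ k) : (mixtureLaw P X γ s).real univ = ∑ k ∈ s, γ k := by
  rw [measureReal_def, mixtureLaw_apply hX MeasurableSet.univ, ENNReal.toReal_sum
    fun k _ => ENNReal.mul_ne_top ENNReal.ofReal_ne_top (measure_ne_top _ _)]
  refine Finset.sum_congr rfl fun k hk => ?_
  rw [preimage_univ, measure_univ, mul_one, ENNReal.toReal_ofReal (hγ k hk)]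

theorem integral_id_mixtureLaw (hX : ∀ k ∈ s, AEMeasurable (X k) P)
    (hint : ∀ k ∈ s, Integrable (X k) P) (hγ : ∀ k ∈ s, 0 ≤ γ k) :
    ∫ x, x ∂(mixtureLaw P X γ s) = ∑ k ∈ s, γ k * ∫ ω, X k ω ∂P := by
  have hintmap (k) (hk : k ∈ s) : Integrable (fun x => x) (P.map (X k)) :=
    (integrable_map_measure aestronglyMeasurable_id (hX k hk)).2 (hint k hk)
  rw [mixtureLaw, integral_finsetSum_measure fun k hk => (hintmap k hk).smul_measure
    ENNReal.ofReal_ne_top]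
  refine Finset.sum_congr rfl fun k hk => ?_
  rw [integral_smul_measure, ENNReal.toReal_ofReal (hγ k hk), smul_eq_mul,
    integral_map (f := fun x => x) (hX k hk) aestronglyMeasurable_id]

theorem map_eq_mixtureLaw_of_cdfOf_eq [IsFiniteMeasure P] {W : Ω → ℝ} (hW : AEMeasurable W P)
    (hX : ∀ k ∈ s, AEMeasurable (X k) P) (hγ : ∀ k ∈ s, 0 ≤ γ k)
    (hmix : ∀ w, cdfOf P W w = ∑ k ∈ s, γ k * cdfOf P (X k) w) :
    P.map W = mixtureLaw P X γ s := by
  refine Measure.ext_of_Iic _ _ fun w => ?_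
  rw [Measure.map_apply_of_aemeasurable hW measurableSet_Iic, mixtureLaw_apply hX measurableSet_Iic,
    ← ENNReal.ofReal_toReal (measure_ne_top P _)]
  change ENNReal.ofReal (cdfOf P W w) = _
  rw [hmix, ENNReal.ofReal_sum_of_nonneg (f := fun k => γ k * cdfOf P (X k) w)
    fun k hk => mul_nonneg (hγ k hk) ENNReal.toReal_nonneg]
  refine Finset.sum_congr rfl fun k _ => ?_
  rw [cdfOf, ENNReal.ofReal_mul' ENNReal.toReal_nonneg, ENNReal.ofReal_toReal (measure_ne_top P _)]
  rfl

end Mixture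

theorem weighted_average_mixture_bounds_general
    {Ω : Type*} [MeasurableSpace Ω] (P : Measure Ω) [IsProbabilityMeasure P]
    (K : ℕ) (W : Ω → ℝ) (Wk : ℕ → Ω → ℝ) (γ : ℕ → ℝ)
    (hWm : Measurable W) (hWkm : ∀ k ≤ K, Measurable (Wk k))
    (hW : Integrable W P) (hWk : ∀ k ≤ K, Integrable (Wk k) P)
    (hγ : ∀ k ≤ K, 0 ≤ γ k)
    (hmix : ∀ w, cdfOf P W w = ∑ k ∈ Finset.range (K + 1), γ k * cdfOf P (Wk k) w)
    (l l' : ℕ) (hl'K : l' ≤ K)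
    (hγbar : 0 < ∑ k ∈ Finset.Icc l l', γ k) :
    lowerTrunc (cdfOf P W) (∑ k ∈ Finset.Icc l l', γ k)
        ≤ ∑ k ∈ Finset.Icc l l',
            (γ k / ∑ j ∈ Finset.Icc l l', γ j) * ∫ ω, Wk k ω ∂P ∧
      ∑ k ∈ Finset.Icc l l',
          (γ k / ∑ j ∈ Finset.Icc l l', γ j) * ∫ ω, Wk k ω ∂P
        ≤ upperTrunc (cdfOf P W) (∑ k ∈ Finset.Icc l l', γ k) := by
  set S := Finset.Icc l l'
  set g := ∑ k ∈ S, γ k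
  have hK (k) (hk : k ∈ Finset.range (K + 1)) : k ≤ K := Finset.mem_range_succ_iff.1 hk
  have hS (k) (hk : k ∈ S) : k ≤ K := (Finset.mem_Icc.1 hk).2.trans hl'K
  have hX (k) (hk : k ≤ K) : AEMeasurable (Wk k) P := (hWkm k hk).aemeasurable
  have := Measure.isProbabilityMeasure_map (μ := P) hWm.aemeasurable
  have hle : mixtureLaw P Wk γ S ≤ P.map W := by
    rw [map_eq_mixtureLaw_of_cdfOf_eq hWm.aemeasurable (fun k hk => hX k (hK k hk))
      (fun k hk => hγ k (hK k hk)) hmix]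
    exact mixtureLaw_mono fun k hk => Finset.mem_range_succ_iff.2 (hS k hk)
  have hint : Integrable id (P.map W) :=
    (integrable_map_measure aestronglyMeasurable_id hWm.aemeasurable).2 hW
  have hlow := setIntegral_Ioc_quantileFn_cdf_le_integral hint hle
  have hupp := integral_le_setIntegral_Ico_quantileFn_cdf hint hle
  rw [mixtureLaw_real_univ (fun k hk => hX k (hS k hk)) (fun k hk => hγ k (hS k hk)),
    integral_id_mixtureLaw (fun k hk => hX k (hS k hk)) (fun k hk => hWk k (hS k hk))
      (fun k hk => hγ k (hS k hk))] at hlow hupp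
  have havg :
      ∑ k ∈ S, γ k / g * ∫ ω, Wk k ω ∂P = g⁻¹ * ∑ k ∈ S, γ k * ∫ ω, Wk k ω ∂P := by
    rw [Finset.mul_sum]
    exact Finset.sum_congr rfl fun k _ => by ring
  rw [lowerTrunc, upperTrunc, cdfOf_eq_cdf_map hWm.aemeasurable, havg]
  have hg : 0 ≤ g⁻¹ := inv_nonneg.2 hγbar.le
  exact ⟨mul_le_mul_of_nonneg_left hlow hg, mul_le_mul_of_nonneg_left hupp hg⟩

/-- bounds for a weighted average of mixture components: if
`F_W = Σ_{k=0}^K γ_k F_{W_k}` with nonnegative weights summing to one, then for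
all `l ≤ l' ≤ K` with `γ̄ := Σ_{k=l}^{l'} γ_k > 0`,
`E[F_W⁻¹(U) | U ≤ γ̄] ≤ Σ_{k=l}^{l'} (γ_k/γ̄) E[W_k] ≤ E[F_W⁻¹(U) | U ≥ 1 − γ̄]`. -/
theorem weighted_average_mixture_bounds
    {Ω : Type*} [MeasurableSpace Ω] (P : Measure Ω) [IsProbabilityMeasure P]
    (K : ℕ) (W : Ω → ℝ) (Wk : ℕ → Ω → ℝ) (γ : ℕ → ℝ)
    (hWm : Measurable W) (hWkm : ∀ k ≤ K, Measurable (Wk k))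
    (hW : Integrable W P) (hWk : ∀ k ≤ K, Integrable (Wk k) P)
    (hγ : ∀ k ≤ K, 0 ≤ γ k) (hsum : ∑ k ∈ Finset.range (K + 1), γ k = 1)
    (hmix : ∀ w, cdfOf P W w = ∑ k ∈ Finset.range (K + 1), γ k * cdfOf P (Wk k) w)
    (l l' : ℕ) (hll' : l ≤ l') (hl'K : l' ≤ K)
    (hγbar : 0 < ∑ k ∈ Finset.Icc l l', γ k) :
    lowerTrunc (cdfOf P W) (∑ k ∈ Finset.Icc l l', γ k)
        ≤ ∑ k ∈ Finset.Icc l l',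
            (γ k / ∑ j ∈ Finset.Icc l l', γ j) * ∫ ω, Wk k ω ∂P ∧
      ∑ k ∈ Finset.Icc l l',
          (γ k / ∑ j ∈ Finset.Icc l l', γ j) * ∫ ω, Wk k ω ∂P
        ≤ upperTrunc (cdfOf P W) (∑ k ∈ Finset.Icc l l', γ k) :=
  weighted_average_mixture_bounds_general P K W Wk γ hWm hWkm hW hWk hγ hmix l l' hl'K hγbar
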